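/- Let m ∈ ℝ^n \ {0}, and define on upper half-space the Cl_n-valued function f(x) = (1 - i e_n m/‖m‖) e^{2πi⟨m, x̲⟩ - 2π‖m‖ x_n}, where x̲ = (x_0,...,x_{n-1}) and m is identified with the paravector Σ m_j e_j-component vector in ℝ ⊕ ℝ^{n-1}. Then f is left monogenic: Df = 0 with D = ∂/∂x_0 + Σ_{i=1}^n e_i ∂/∂x_i. -/

import Mathlib

/-!
With `c` the frequency vector `(2πi m₀, 2πi m₁, …, 2πi m_{n-1}, -2π‖m‖)`, the plane wave is
`exp ⟨c, x⟩ • a` with constant amplitude `a = 1 - (i/‖m‖) eₙ m`, so `D` acts on it as left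
multiplication of `a` by the symbol `c₀ + Σ cᵢ eᵢ = 2π (i m - ‖m‖ eₙ)`. The Clifford relations give
`eₙ m = m̄ eₙ` and `m m̄ = ‖m‖²`, hence `m eₙ m = ‖m‖² eₙ`; together with `eₙ² = -1` this makes
`i m a = i m + ‖m‖ eₙ = ‖m‖ eₙ a`, so the symbol kills the amplitude.
-/

open Real

/-- Partial derivative in the `i`-th coordinate direction. -/
noncomputable def pderiv' {n : ℕ} {A : Type*} [NormedAddCommGroup A] [NormedSpace ℝ A]
    (i : Fin n) (f : EuclideanSpace ℝ (Fin n) → A) (x : EuclideanSpace ℝ (Fin n)) : A :=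
  fderiv ℝ f x (EuclideanSpace.single i 1)

section Clifford

theorem eq_of_add_self_eq_add_self {A : Type*} [AddCommGroup A] [Module ℝ A] {x y : A}
    (h : x + x = y + y) : x = y := by
  have := congrArg ((2 : ℝ)⁻¹ • ·) h
  simpa [← two_smul ℝ, smul_smul] using this

variable {A : Type*} [Ring A] {ι : Type*} [DecidableEq ι]

def CliffordRelations (e : ι → A) : Prop :=
  ∀ i j, e i * e j + e j * e i = if i = j then (-2 : A) else 0

variable {e : ι → A}

theorem CliffordRelations.comp {κ : Type*} [DecidableEq κ] (hrel : CliffordRelations e)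
    {f : κ → ι} (hf : f.Injective) : CliffordRelations (e ∘ f) := fun i j => by
  simpa [hf.eq_iff] using hrel (f i) (f j)

theorem CliffordRelations.anticomm (hrel : CliffordRelations e)
    {i j : ι} (hij : i ≠ j) : e i * e j = -(e j * e i) :=
  eq_neg_of_add_eq_zero_left <| by rw [hrel, if_neg hij]

variable [Algebra ℝ A]

theorem CliffordRelations.mul_self (hrel : CliffordRelations e)
    (i : ι) : e i * e i = -1 :=
  eq_of_add_self_eq_add_self <| by rw [hrel, if_pos rfl]; norm_num

theorem CliffordRelations.sum_smul_mul_self [Fintype ι] (hrel : CliffordRelations e)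
    (c : ι → ℝ) :
    (∑ i, c i • e i) * (∑ i, c i • e i) = algebraMap ℝ A (-∑ i, c i ^ 2) := by
  refine eq_of_add_self_eq_add_self ?_
  calc (∑ i, c i • e i) * (∑ i, c i • e i) + (∑ i, c i • e i) * (∑ i, c i • e i)
      = ∑ i, ∑ j, (c i * c j) • (e i * e j + e j * e i) := by
        simp only [Finset.sum_mul, Finset.mul_sum, smul_mul_smul, smul_add,
          Finset.sum_add_distrib]
        congr 1
        rw [Finset.sum_comm]
        exact Finset.sum_congr rfl fun i _ => Finset.sum_congr rfl fun j _ => by rw [mul_comm]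
    _ = ∑ i, (c i * c i) • (-2 : A) := by
        refine Finset.sum_congr rfl fun i _ => ?_
        rw [Finset.sum_congr rfl fun j _ => congrArg _ (hrel i j)]
        simp only [smul_ite, smul_zero]
        rw [Finset.sum_ite_eq]
        simp
    _ = _ := by
        rw [← map_add, Algebra.algebraMap_eq_smul_one, ← Finset.sum_smul]
        rw [show (-2 : A) = (-2 : ℝ) • (1 : A) by rw [neg_smul, two_smul, one_add_one_eq_two],
          smul_smul]
        congr 1
        simp only [sq]
        ring

omit [DecidableEq ι] in
theorem mul_sum_smul_of_anticomm [Fintype ι] {u : A} (h : ∀ i, u * e i = -(e i * u))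
    (c : ι → ℝ) : u * ∑ i, c i • e i = -((∑ i, c i • e i) * u) := by
  simp [Finset.mul_sum, Finset.sum_mul, h]

end Clifford

theorem paravector_mul_mul_self {A : Type*} [Ring A] [Algebra ℝ A] {n v : A} {m0 s : ℝ}
    (hnv : n * v = -(v * n)) (hv : v * v = algebraMap ℝ A (-s)) :
    (algebraMap ℝ A m0 + v) * n * (algebraMap ℝ A m0 + v) = (m0 ^ 2 + s) • n := by
  have hswap : n * (algebraMap ℝ A m0 + v) = (algebraMap ℝ A m0 - v) * n := by
    rw [mul_add, sub_mul, hnv, ← Algebra.commutes, sub_eq_add_neg]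
  have hnorm : (algebraMap ℝ A m0 + v) * (algebraMap ℝ A m0 - v) =
      algebraMap ℝ A (m0 ^ 2 + s) := by
    rw [add_mul, mul_sub, mul_sub, Algebra.commutes m0 v, hv]
    simp only [map_add, map_neg, map_mul, sq]
    abel
  rw [mul_assoc, hswap, ← mul_assoc, hnorm, Algebra.smul_def]

theorem I_smul_mul_amplitude {A : Type*} [Ring A] [Algebra ℂ A] {n M : A} {r : ℂ}
    (hr : r ≠ 0) (hn : n * n = -1) (hMnM : M * n * M = r ^ 2 • n) :
    Complex.I • (M * (1 - (Complex.I / r) • (n * M))) =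
      r • (n * (1 - (Complex.I / r) • (n * M))) := by
  have hM : M * (1 - (Complex.I / r) • (n * M)) = M - (Complex.I * r) • n := by
    rw [mul_sub, mul_one, mul_smul_comm, ← mul_assoc, hMnM, smul_smul]
    congr 2
    field_simp
  have hn' : n * (1 - (Complex.I / r) • (n * M)) = n + (Complex.I / r) • M := by
    rw [mul_sub, mul_one, mul_smul_comm, ← mul_assoc, hn, neg_one_mul, smul_neg, sub_neg_eq_add]
  rw [hM, hn', smul_sub, smul_add, smul_smul, smul_smul, ← mul_assoc, Complex.I_mul_I,
    mul_div_cancel₀ _ hr]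
  simp only [neg_one_mul, neg_smul, sub_neg_eq_add, add_comm]

theorem pderiv'_cexp_sum_mul_smul {n : ℕ} {A : Type*} [NormedAddCommGroup A] [NormedSpace ℂ A]
    (c : Fin n → ℂ) (a : A) (i : Fin n) (x : EuclideanSpace ℝ (Fin n)) :
    pderiv' i (fun y => Complex.exp (∑ k, c k * (y k : ℂ)) • a) x =
      (Complex.exp (∑ k, c k * (x k : ℂ)) * c i) • a := by
  let L : EuclideanSpace ℝ (Fin n) →L[ℝ] ℂ :=
    ∑ k, c k • Complex.ofRealCLM.comp (EuclideanSpace.proj k)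
  have hL : ∀ y, L y = ∑ k, c k * (y k : ℂ) := fun y => by simp [L]
  have hder := (L.hasFDerivAt (x := x)).cexp.smul_const a
  simp only [hL] at hder
  rw [pderiv', hder.fderiv]
  simp [hL, apply_ite Complex.ofReal]

-- Only the `ℂ`-structure is assumed, so `pderiv'` uses the real scalars restricted from `ℂ`:
-- this is the instance the theorem's statement elaborates to.
noncomputable def diracOp {d : ℕ} {A : Type*} [NormedRing A] [NormedAlgebra ℂ A]
    (e : Fin (d + 1) → A) (f : EuclideanSpace ℝ (Fin (d + 2)) → A)
    (x : EuclideanSpace ℝ (Fin (d + 2))) : A :=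
  pderiv' 0 f x + ∑ i, e i * pderiv' i.succ f x

theorem diracOp_cexp_smul {d : ℕ} {A : Type*} [NormedRing A] [NormedAlgebra ℂ A]
    (e : Fin (d + 1) → A) (c : Fin (d + 2) → ℂ) (a : A) (x : EuclideanSpace ℝ (Fin (d + 2))) :
    diracOp e (fun y => Complex.exp (∑ k, c k * (y k : ℂ)) • a) x =
      Complex.exp (∑ k, c k * (x k : ℂ)) • (c 0 • a + ∑ i, c i.succ • (e i * a)) := by
  simp only [diracOp, pderiv'_cexp_sum_mul_smul, smul_add, Finset.smul_sum, mul_smul_comm,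
    smul_smul]

theorem ofReal_smul_eq_smul {A : Type*} [Ring A] [Algebra ℝ A] [Algebra ℂ A]
    [IsScalarTower ℝ ℂ A] (x : ℝ) (a : A) : (x : ℂ) • a = x • a := by
  rw [← smul_one_smul ℂ x a, Complex.real_smul, mul_one]

noncomputable def planeWaveFreq {d : ℕ} (m0 : ℝ) (mv : Fin d → ℝ) (r : ℝ) : Fin (d + 2) → ℂ :=
  Fin.cons (2 * π * Complex.I * m0) (Fin.snoc (fun j => 2 * π * Complex.I * mv j) (-(2 * π * r)))

theorem planeWaveFreq_sum_mul {d : ℕ} (m0 : ℝ) (mv : Fin d → ℝ) (r : ℝ)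
    (y : EuclideanSpace ℝ (Fin (d + 2))) :
    2 * π * Complex.I * ((m0 * y 0 + ∑ j : Fin d, mv j * y j.castSucc.succ : ℝ) : ℂ) -
        2 * π * ((r * y (Fin.last (d + 1)) : ℝ) : ℂ) =
      ∑ k, planeWaveFreq m0 mv r k * (y k : ℂ) := by
  simp only [Fin.sum_univ_succ (n := d + 1), Fin.sum_univ_castSucc, planeWaveFreq, Fin.cons_zero,
    Fin.cons_succ, Fin.snoc_castSucc, Fin.snoc_last, Fin.succ_last]
  push_cast
  simp only [mul_add, Finset.mul_sum]
  ring_nf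

theorem planeWaveFreq_symbol {d : ℕ} {A : Type*} [Ring A] [Algebra ℝ A] [Algebra ℂ A]
    [IsScalarTower ℝ ℂ A] (e : Fin (d + 1) → A) (m0 : ℝ) (mv : Fin d → ℝ) (r : ℝ) (a : A) :
    planeWaveFreq m0 mv r 0 • a + ∑ i, planeWaveFreq m0 mv r i.succ • (e i * a) =
      (2 * π : ℂ) • (Complex.I • ((algebraMap ℝ A m0 + ∑ j, mv j • e j.castSucc) * a) -
        (r : ℂ) • (e (Fin.last d) * a)) := by
  simp only [Fin.sum_univ_castSucc, planeWaveFreq, Fin.cons_zero, Fin.cons_succ,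
    Fin.snoc_castSucc, Fin.snoc_last, add_mul, Finset.sum_mul, Algebra.algebraMap_eq_smul_one,
    smul_mul_assoc, one_mul, smul_add, smul_sub, Finset.smul_sum, smul_smul]
  simp only [← ofReal_smul_eq_smul, smul_smul, neg_smul, sub_eq_add_neg, add_assoc]

theorem sq_add_sum_sq_pos {d : ℕ} {m0 : ℝ} {mv : Fin d → ℝ} (hm : ¬(m0 = 0 ∧ mv = 0)) :
    0 < m0 ^ 2 + ∑ j, mv j ^ 2 := by
  rcases not_and_or.1 hm with h0 | hv
  · exact add_pos_of_pos_of_nonneg (by positivity) (by positivity)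
  · obtain ⟨j, hj⟩ := Function.ne_iff.1 hv
    exact add_pos_of_nonneg_of_pos (sq_nonneg _)
      (Finset.sum_pos' (fun _ _ => sq_nonneg _) ⟨j, Finset.mem_univ _, sq_pos_of_ne_zero hj⟩)

/-- for a nonzero paravector `m = m₀ + m₁e₁ + ⋯ + m_{n-1}e_{n-1}` in
`ℝ ⊕ ℝ^{n-1}` (here `n = d+1`, generators `e₁,…,eₙ` of the complexified Clifford
algebra, `eₙ = e (Fin.last d)`), the plane-wave exponential
`f(x) = (1 - i eₙ m/‖m‖) e^{2πi⟨m,x̲⟩ - 2π‖m‖xₙ}` is left monogenic: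
`Df = 0` with `D = ∂/∂x₀ + Σ_{i=1}^n eᵢ ∂/∂xᵢ`. -/
theorem plane_wave_monogenic
    {A : Type*} [NormedRing A] [NormedAlgebra ℝ A] [NormedAlgebra ℂ A]
    [IsScalarTower ℝ ℂ A] (d : ℕ)
    (e : Fin (d + 1) → A)
    (hrel : ∀ i j, e i * e j + e j * e i = if i = j then (-2 : A) else 0)
    (m0 : ℝ) (mv : Fin d → ℝ) (hm : ¬(m0 = 0 ∧ mv = 0)) :
    ∀ x : EuclideanSpace ℝ (Fin (d + 2)),
      pderiv' 0
          (fun y : EuclideanSpace ℝ (Fin (d + 2)) =>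
            Complex.exp (2 * π * Complex.I *
                ((m0 * y 0 + ∑ j : Fin d, mv j * y j.castSucc.succ : ℝ) : ℂ) -
              2 * π * ((Real.sqrt (m0 ^ 2 + ∑ j, mv j ^ 2) * y (Fin.last (d + 1)) : ℝ) : ℂ)) •
            ((1 : A) - (Complex.I / ((Real.sqrt (m0 ^ 2 + ∑ j, mv j ^ 2) : ℝ) : ℂ)) •
              (e (Fin.last d) *
                (algebraMap ℝ A m0 + ∑ j : Fin d, mv j • e j.castSucc)))) x +
        ∑ i : Fin (d + 1), e i *
          pderiv' i.succ
            (fun y : EuclideanSpace ℝ (Fin (d + 2)) =>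
              Complex.exp (2 * π * Complex.I *
                  ((m0 * y 0 + ∑ j : Fin d, mv j * y j.castSucc.succ : ℝ) : ℂ) -
                2 * π * ((Real.sqrt (m0 ^ 2 + ∑ j, mv j ^ 2) * y (Fin.last (d + 1)) : ℝ) : ℂ)) •
              ((1 : A) - (Complex.I / ((Real.sqrt (m0 ^ 2 + ∑ j, mv j ^ 2) : ℝ) : ℂ)) •
                (e (Fin.last d) *
                  (algebraMap ℝ A m0 + ∑ j : Fin d, mv j • e j.castSucc)))) x = 0 := by
  intro x
  have hcl : CliffordRelations e := hrel
  have hpos := sq_add_sum_sq_pos hm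
  set r := Real.sqrt (m0 ^ 2 + ∑ j, mv j ^ 2)
  have hr : (r : ℂ) ≠ 0 := Complex.ofReal_ne_zero.2 (Real.sqrt_pos.2 hpos).ne'
  have hvv := (hcl.comp (Fin.castSucc_injective d)).sum_smul_mul_self mv
  have hnv := mul_sum_smul_of_anticomm (u := e (Fin.last d)) (e := e ∘ Fin.castSucc)
    (fun j => hcl.anticomm (Fin.castSucc_lt_last j).ne') mv
  have hMnM := paravector_mul_mul_self (m0 := m0) hnv hvv
  rw [Function.comp_def, ← Real.sq_sqrt hpos.le, ← ofReal_smul_eq_smul, Complex.ofReal_pow] at hMnM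
  have key := I_smul_mul_amplitude hr (hcl.mul_self (Fin.last d)) hMnM
  change diracOp e _ x = 0
  simp only [planeWaveFreq_sum_mul]
  rw [diracOp_cexp_smul, planeWaveFreq_symbol, key, sub_self, smul_zero, smul_zero]
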